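/- For every integer n ≥ 1, define c_0 = 1 and c_j = ∏_{ℓ=1}^j 1/(2ℓ(n+2ℓ)) for j ≥ 1, and let ψ(ρ) = ∑_{j=0}^∞ c_j ρ^{2j+1}. Then the series converges for every ρ ∈ ℝ, and ρ ψ'(ρ) > ψ(ρ) for every ρ > 0; consequently there is no λ > 0 satisfying the Robin boundary relation λ ψ'(λ) = ψ(λ). -/

import Mathlib

/-!
Since `0 < c n j ≤ 1 / j!` and `2j + 1 ≤ 4^j`, the series for `ψ` and its termwise derivative are
dominated by exponential series, so `ψ` may be differentiated termwise on all of `ℝ`. Then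
`ρ ψ'(ρ) - ψ(ρ) = ∑ 2 j c_j ρ^(2j+1)`, a series of nonnegative terms whose `j = 1` term is
positive for `ρ > 0`.
-/

open Real Filter

/-- Coefficients of the degree-one radial mode: `c 0 = 1`, `c j = ∏_{ℓ=1}^j 1/(2ℓ(n+2ℓ))`. -/
noncomputable def c (n : ℕ) (j : ℕ) : ℝ :=
  ∏ ℓ ∈ Finset.Icc 1 j, 1 / (2 * (ℓ : ℝ) * ((n : ℝ) + 2 * (ℓ : ℝ)))

/-- The regular radial solution of the degree-one mode equation:
`ψ(ρ) = ∑_{j=0}^∞ c_j ρ^{2j+1}`. -/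
noncomputable def psi (n : ℕ) (ρ : ℝ) : ℝ := ∑' j : ℕ, c n j * ρ ^ (2 * j + 1)

theorem c_zero (n : ℕ) : c n 0 = 1 := by
  simp [c]

theorem c_succ (n j : ℕ) :
    c n (j + 1) = c n j / (2 * ((j : ℝ) + 1) * ((n : ℝ) + 2 * ((j : ℝ) + 1))) := by
  rw [c, Finset.prod_Icc_succ_top (Nat.le_add_left 1 j), ← c]
  push_cast
  ring

theorem c_pos (n j : ℕ) : 0 < c n j := by
  induction j with
  | zero => simp [c_zero]
  | succ j ih => rw [c_succ]; positivity

theorem c_le_inv_factorial (n j : ℕ) : c n j ≤ 1 / j.factorial := by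
  induction j with
  | zero => simp [c_zero]
  | succ j ih =>
    have hj : ((j : ℝ) + 1) ≤ 2 * ((j : ℝ) + 1) * ((n : ℝ) + 2 * ((j : ℝ) + 1)) := by
      nlinarith [(n.cast_nonneg : (0 : ℝ) ≤ n), (j.cast_nonneg : (0 : ℝ) ≤ j)]
    calc c n (j + 1) ≤ 1 / j.factorial / ((j : ℝ) + 1) := by
          rw [c_succ]
          exact div_le_div₀ (by positivity) ih (by positivity) hj
      _ = 1 / (j + 1).factorial := by
          rw [Nat.factorial_succ, Nat.cast_mul, Nat.cast_succ, div_div, mul_comm]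

theorem summable_c_mul_pow (n : ℕ) (y : ℝ) : Summable fun j => c n j * y ^ j := by
  refine (Real.summable_pow_div_factorial |y|).of_norm_bounded fun j => ?_
  rw [norm_mul, norm_pow, Real.norm_eq_abs, Real.norm_eq_abs, abs_of_pos (c_pos n j), mul_comm,
    div_eq_mul_one_div]
  gcongr
  exact c_le_inv_factorial n j

theorem summable_psi (n : ℕ) (ρ : ℝ) : Summable fun j => c n j * ρ ^ (2 * j + 1) :=
  ((summable_c_mul_pow n (ρ ^ 2)).mul_left ρ).congr fun j => by ring

theorem summable_psi_deriv (n : ℕ) (ρ : ℝ) :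
    Summable fun j : ℕ => (2 * (j : ℝ) + 1) * c n j * ρ ^ (2 * j) := by
  have hρ (j : ℕ) : 0 ≤ ρ ^ (2 * j) := (even_two_mul j).pow_nonneg ρ
  refine (summable_c_mul_pow n (4 * ρ ^ 2)).of_nonneg_of_le
    (fun j => by have := c_pos n j; have := hρ j; positivity) fun j => ?_
  have h4 : (2 * (j : ℝ) + 1) ≤ 4 ^ j := by
    have : 2 * j < 2 ^ (2 * j) := Nat.lt_two_pow_self
    rw [pow_mul] at this
    exact_mod_cast this
  rw [mul_pow, ← pow_mul]
  have := mul_le_mul_of_nonneg_right h4 (mul_nonneg (c_pos n j).le (hρ j))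
  linarith

theorem hasDerivAt_psi (n : ℕ) (ρ : ℝ) :
    HasDerivAt (psi n) (∑' j : ℕ, (2 * (j : ℝ) + 1) * c n j * ρ ^ (2 * j)) ρ := by
  set R := |ρ| + 1
  have hmem : ∀ y, |y| < R → y ∈ Set.Ioo (-R) R := fun y hy => abs_lt.mp hy
  refine hasDerivAt_tsum_of_isPreconnected (g := fun j y => c n j * y ^ (2 * j + 1))
    (g' := fun j y => (2 * (j : ℝ) + 1) * c n j * y ^ (2 * j))
    (summable_psi_deriv n R) isOpen_Ioo isPreconnected_Ioo
    (fun j y _ => ?_) (fun j y hy => ?_) (hmem 0 (by simp [R]; positivity)) (summable_psi n 0)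
    (hmem ρ (by simp [R]))
  · refine ((hasDerivAt_pow (2 * j + 1) y).const_mul (c n j)).congr_deriv ?_
    rw [Nat.add_sub_cancel]
    push_cast
    ring
  · have hc := (c_pos n j).le
    rw [norm_mul, norm_pow, Real.norm_eq_abs, Real.norm_eq_abs, abs_of_nonneg (by positivity)]
    gcongr
    exact abs_le.mpr ⟨hy.1.le, hy.2.le⟩

theorem psi_lt_mul_deriv_psi (n : ℕ) {ρ : ℝ} (hρ : 0 < ρ) : psi n ρ < ρ * deriv (psi n) ρ := by
  have hdiff : ρ * deriv (psi n) ρ - psi n ρ = ∑' j : ℕ, 2 * (j : ℝ) * c n j * ρ ^ (2 * j + 1) := by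
    rw [(hasDerivAt_psi n ρ).deriv, psi, ← tsum_mul_left,
      ← ((summable_psi_deriv n ρ).mul_left ρ).tsum_sub (summable_psi n ρ)]
    congr 1 with j
    ring
  have hsum : Summable fun j : ℕ => 2 * (j : ℝ) * c n j * ρ ^ (2 * j + 1) :=
    (((summable_psi_deriv n ρ).mul_left ρ).sub (summable_psi n ρ)).congr fun j => by ring
  have hpos := hsum.tsum_pos (fun j => by have := c_pos n j; positivity) 1
    (by have := c_pos n 1; norm_num; positivity)
  linarith

theorem stmt11_general (n : ℕ) :
    (∀ ρ : ℝ, Summable fun j : ℕ => c n j * ρ ^ (2 * j + 1)) ∧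
    (∀ ρ : ℝ, 0 < ρ → psi n ρ < ρ * deriv (psi n) ρ) ∧
    ¬∃ l : ℝ, 0 < l ∧ l * deriv (psi n) l = psi n l := by
  refine ⟨summable_psi n, fun ρ hρ => psi_lt_mul_deriv_psi n hρ, ?_⟩
  rintro ⟨l, hl, hrobin⟩
  exact (psi_lt_mul_deriv_psi n hl).ne' hrobin

theorem stmt11 (n : ℕ) (hn : 1 ≤ n) :
    (∀ ρ : ℝ, Summable fun j : ℕ => c n j * ρ ^ (2 * j + 1)) ∧
    (∀ ρ : ℝ, 0 < ρ → psi n ρ < ρ * deriv (psi n) ρ) ∧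
    ¬∃ l : ℝ, 0 < l ∧ l * deriv (psi n) l = psi n l :=
  stmt11_general n
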